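/- (Proposition 3.4, case n = 1, order-reversed version.) For every integer m > −c_{ij} and every e ∈ {1, −1}: ∑_{r+s=m, r,s≥0} (−1)^r q_i^{er(−c_{ij}−m+1)} B_i^{(s)} B_j B_i^{(r)} = 0. -/

import Mathlib

/-!
Put `F_m = ∑_{r+s=m} (-1)^r v^{er(-c-m+1)} x^{(s)} y x^{(r)}`. Multiplying `F_m` by `x` on either
side, with `x x^{(n)} = x^{(n)} x = [n+1] x^{(n+1)}` and the identity
`[a-r] + v^{-ea} [r] = [a] v^{-er}` (`e = ±1`), gives the recursion
`[m+1] F_{m+1} = x F_m - v^{e(-c-2m)} F_m x`.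
For `m = 1 - c` all the powers of `v` are `1`, and `F_m` is `(-1)^m` times the Serre relation read
backwards, hence `0`. Since `v = X^ε` is not a root of unity, `[m+1] ≠ 0`, and the recursion
propagates `F_m = 0` to every `m ≥ 1 - c`.
-/

noncomputable section

/-- The quantum integer `[n]_v = (v^n - v^{-n})/(v - v^{-1})`. -/
def qint {K : Type*} [Field K] (v : RatFunc K) (n : ℤ) : RatFunc K :=
  (v ^ n - v ^ (-n)) / (v - v⁻¹)

/-- The quantum factorial `[m]_v! = [1]_v [2]_v ⋯ [m]_v`. -/
def qfact {K : Type*} [Field K] (v : RatFunc K) (m : ℕ) : RatFunc K :=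
  ∏ k ∈ Finset.range m, qint v ((k : ℤ) + 1)

/-- The divided power `x^{(m)} = x^m/[m]_v!` for `m ≥ 0`, and `0` for `m < 0`. -/
def dp {K : Type*} [Field K] {A : Type*} [Ring A] [Algebra (RatFunc K) A]
    (v : RatFunc K) (x : A) (m : ℤ) : A :=
  if m < 0 then 0 else (qfact v m.toNat)⁻¹ • x ^ m.toNat

open Finset Function RatFunc

namespace RatFunc

variable {K : Type*} [Field K]

lemma intDegree_zpow {x : RatFunc K} (hx : x ≠ 0) (n : ℤ) :
    (x ^ n).intDegree = n * x.intDegree := by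
  induction n using Int.induction_on with
  | zero => simp
  | succ k ih => rw [zpow_add_one₀ hx, intDegree_mul (zpow_ne_zero _ hx) hx, ih]; ring
  | pred k ih =>
    rw [zpow_sub_one₀ hx, intDegree_mul (zpow_ne_zero _ hx) (inv_ne_zero hx), ih, intDegree_inv]
    ring

lemma zpow_injective_X_pow {ε : ℕ} (hε : ε ≠ 0) :
    Injective fun n : ℤ => ((X : RatFunc K) ^ ε) ^ n := by
  intro a b h
  have hX : (X : RatFunc K) ^ ε ≠ 0 := pow_ne_zero ε X_ne_zero
  have hdeg := congrArg intDegree h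
  simp only at hdeg
  rw [intDegree_zpow hX, intDegree_zpow hX, ← zpow_natCast, intDegree_zpow X_ne_zero,
    intDegree_X, mul_one] at hdeg
  exact mul_right_cancel₀ (Int.natCast_ne_zero.2 hε) hdeg

end RatFunc

section QuantumInteger

variable {K : Type*} [Field K] {v : RatFunc K}

@[simp]
lemma qint_zero (v : RatFunc K) : qint v 0 = 0 := by simp [qint]

lemma qint_ne_zero (hv : Injective fun n : ℤ => v ^ n) {n : ℤ} (hn : n ≠ 0) : qint v n ≠ 0 := by
  refine div_ne_zero (sub_ne_zero.2 <| hv.ne (by omega)) ?_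
  simpa only [zpow_one, zpow_neg] using sub_ne_zero.2 (hv.ne (show (1 : ℤ) ≠ -1 by decide))

lemma qint_sub_add_zpow_mul_qint (hv : v ≠ 0) {e : ℤ} (he : e = 1 ∨ e = -1) (a r : ℤ) :
    qint v (a - r) + v ^ (-(e * a)) * qint v r = qint v a * v ^ (-(e * r)) := by
  simp only [qint, ← mul_div_assoc, div_mul_eq_mul_div, ← add_div]
  congr 1
  rcases he with rfl | rfl <;>
    · simp only [mul_sub, sub_mul, ← zpow_add₀ hv]
      ring_nf

lemma qfact_succ (v : RatFunc K) (n : ℕ) : qfact v (n + 1) = qfact v n * qint v (n + 1) :=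
  prod_range_succ _ _

end QuantumInteger

section DividedPower

variable {K : Type*} [Field K] {A : Type*} [Ring A] [Algebra (RatFunc K) A] {v : RatFunc K}

lemma dp_natCast (v : RatFunc K) (x : A) (n : ℕ) : dp v x n = (qfact v n)⁻¹ • x ^ n := by
  simp [dp]

lemma dp_of_neg (v : RatFunc K) (x : A) {n : ℤ} (hn : n < 0) : dp v x n = 0 := if_pos hn

lemma commute_dp (v : RatFunc K) (x : A) (n : ℤ) : Commute x (dp v x n) := by
  unfold dp
  split_ifs
  · exact Commute.zero_right x
  · exact ((Commute.refl x).pow_right _).smul_right _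

lemma mul_dp (hq : ∀ n : ℕ, qint v (n + 1) ≠ 0) (x : A) (n : ℤ) :
    x * dp v x n = qint v (n + 1) • dp v x (n + 1) := by
  rcases lt_trichotomy n (-1) with hn | rfl | hn
  · rw [dp_of_neg v x (by omega), dp_of_neg v x (by omega), mul_zero, smul_zero]
  · rw [dp_of_neg v x (by norm_num), neg_add_cancel, qint_zero, mul_zero, zero_smul]
  · lift n to ℕ using (by omega)
    rw [dp_natCast, ← Nat.cast_succ, dp_natCast, mul_smul_comm, ← pow_succ', smul_smul,
      qfact_succ, mul_inv_rev, ← mul_assoc, Nat.cast_succ, mul_inv_cancel₀ (hq n), one_mul]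

lemma dp_mul (hq : ∀ n : ℕ, qint v (n + 1) ≠ 0) (x : A) (n : ℤ) :
    dp v x n * x = qint v (n + 1) • dp v x (n + 1) :=
  (commute_dp v x n).eq ▸ mul_dp hq x n

def dpSum (v : RatFunc K) (x y : A) (a : ℕ → RatFunc K) (m : ℕ) : A :=
  ∑ r ∈ range (m + 1), a r • (dp v x ((m : ℤ) - r) * y * dp v x r)

lemma mul_dpSum (hq : ∀ n : ℕ, qint v (n + 1) ≠ 0) (x y : A) (a : ℕ → RatFunc K) (m : ℕ) :
    x * dpSum v x y a m = dpSum v x y (fun r => a r * qint v ((m : ℤ) + 1 - r)) (m + 1) := by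
  rw [dpSum, dpSum, mul_sum, sum_range_succ _ (m + 1), Nat.cast_succ, sub_self, qint_zero,
    mul_zero, zero_smul, add_zero]
  refine sum_congr rfl fun r _ => ?_
  rw [mul_smul_comm, ← mul_assoc, ← mul_assoc, mul_dp hq, smul_mul_assoc, smul_mul_assoc,
    smul_smul, sub_add_eq_add_sub]

lemma dpSum_mul (hq : ∀ n : ℕ, qint v (n + 1) ≠ 0) (x y : A) (a : ℕ → RatFunc K) (m : ℕ) :
    dpSum v x y a m * x = dpSum v x y (fun r => a (r - 1) * qint v r) (m + 1) := by
  -- at `r = 0` the junk value `a (0 - 1)` is killed by `qint v 0 = 0`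
  rw [dpSum, dpSum, sum_mul, sum_range_succ' _ (m + 1), Nat.cast_zero, qint_zero, mul_zero,
    zero_smul, add_zero]
  refine sum_congr rfl fun r _ => ?_
  rw [smul_mul_assoc, mul_assoc _ (dp v x r), dp_mul hq, mul_smul_comm, smul_smul,
    Nat.add_sub_cancel]
  push_cast
  rw [add_sub_add_right_eq_sub]

lemma dpSum_neg_one_pow (v : RatFunc K) (x y : A) (m : ℕ) :
    dpSum v x y (fun r => (-1) ^ r) m
      = (-1 : RatFunc K) ^ m •
          ∑ n ∈ range (m + 1), (-1 : RatFunc K) ^ n • (dp v x n * y * dp v x ((m : ℤ) - n)) := by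
  rw [dpSum, ← sum_range_reflect, smul_sum]
  refine sum_congr rfl fun n hn => ?_
  obtain ⟨k, rfl⟩ := Nat.exists_eq_add_of_le (Nat.lt_succ_iff.mp (mem_range.mp hn))
  rw [Nat.add_sub_cancel, Nat.add_sub_cancel_left, smul_smul, ← pow_add]
  push_cast
  rw [add_sub_cancel_left, add_sub_cancel_right, add_right_comm, ← two_mul, pow_add, pow_mul,
    neg_one_sq, one_pow, one_mul]

def serreCoeff (v : RatFunc K) (c e : ℤ) (m r : ℕ) : RatFunc K :=
  (-1) ^ r * v ^ (e * r * (-c - m + 1))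

lemma serreCoeff_of_eq {c e : ℤ} {m : ℕ} (h : (m : ℤ) = 1 - c) :
    serreCoeff v c e m = fun r => (-1) ^ r := by
  funext r
  rw [serreCoeff, h, show -c - (1 - c) + 1 = 0 by ring, mul_zero, zpow_zero, mul_one]

lemma qint_mul_serreCoeff_succ (hv : v ≠ 0) {e : ℤ} (he : e = 1 ∨ e = -1) (c : ℤ) (m r : ℕ) :
    qint v (m + 1) * serreCoeff v c e (m + 1) r
      = serreCoeff v c e m r * qint v ((m : ℤ) + 1 - r)
        - v ^ (e * (-c - 2 * m)) * (serreCoeff v c e m (r - 1) * qint v r) := by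
  cases r with
  | zero => simp [serreCoeff]
  | succ s =>
    have hq := qint_sub_add_zpow_mul_qint hv he (m + 1) (s + 1)
    set P := v ^ (e * (s + 1) * (-c - m + 1))
    have h₁ : v ^ (e * (s + 1) * (-c - (m + 1) + 1)) = P * v ^ (-(e * (s + 1))) := by
      rw [← zpow_add₀ hv]; ring_nf
    have h₂ : v ^ (e * (-c - 2 * m)) * v ^ (e * s * (-c - m + 1)) = P * v ^ (-(e * (m + 1))) := by
      rw [← zpow_add₀ hv, ← zpow_add₀ hv]; ring_nf
    simp only [serreCoeff, Nat.add_sub_cancel]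
    push_cast
    rw [h₁]
    linear_combination (-1) ^ s * P * hq + (-1) ^ s * qint v (s + 1) * h₂

lemma qint_smul_dpSum_serreCoeff_succ (hv : v ≠ 0) (hq : ∀ n : ℕ, qint v (n + 1) ≠ 0) {e : ℤ}
    (he : e = 1 ∨ e = -1) (x y : A) (c : ℤ) (m : ℕ) :
    qint v (m + 1) • dpSum v x y (serreCoeff v c e (m + 1)) (m + 1)
      = x * dpSum v x y (serreCoeff v c e m) m
        - v ^ (e * (-c - 2 * m)) • (dpSum v x y (serreCoeff v c e m) m * x) := by
  rw [mul_dpSum hq, dpSum_mul hq]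
  simp only [dpSum, smul_sum, ← sum_sub_distrib, smul_smul, ← sub_smul,
    qint_mul_serreCoeff_succ hv he]

lemma dpSum_serreCoeff_eq_zero (hv : v ≠ 0) (hq : ∀ n : ℕ, qint v (n + 1) ≠ 0) {e : ℤ}
    (he : e = 1 ∨ e = -1) (x y : A) (c : ℤ) {m₀ : ℕ}
    (h₀ : dpSum v x y (serreCoeff v c e m₀) m₀ = 0) {m : ℕ} (hm : m₀ ≤ m) :
    dpSum v x y (serreCoeff v c e m) m = 0 := by
  induction m, hm using Nat.le_induction with
  | base => exact h₀
  | succ m _ ih =>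
    have h := qint_smul_dpSum_serreCoeff_succ hv hq he x y c m
    rw [ih, mul_zero, zero_mul, smul_zero, sub_zero] at h
    exact (smul_eq_zero.mp h).resolve_left (hq m)

end DividedPower

theorem stmt12_general {K : Type*} [Field K]
    {A : Type*} [Ring A] [Algebra (RatFunc K) A]
    (ε : ℕ) (hε : 0 < ε) (v : RatFunc K) (hv : v = RatFunc.X ^ ε)
    (Bi Bj : A) (c : ℤ) (hc : c ≤ 0)
    (hserre : ∑ n ∈ Finset.range ((1 - c).toNat + 1),
        ((-1 : RatFunc K) ^ n) • (dp v Bi (n : ℤ) * Bj * dp v Bi (1 - c - (n : ℤ))) = 0)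
    (m : ℕ) (hm : -c < (m : ℤ)) (e : ℤ) (he : e = 1 ∨ e = -1) :
    ∑ r ∈ Finset.range (m + 1),
        ((-1 : RatFunc K) ^ r * v ^ (e * (r : ℤ) * (-c - (m : ℤ) + 1))) •
          (dp v Bi ((m : ℤ) - (r : ℤ)) * Bj * dp v Bi (r : ℤ)) = 0 := by
  have hv₀ : v ≠ 0 := hv ▸ pow_ne_zero ε X_ne_zero
  have hq : ∀ n : ℕ, qint v (n + 1) ≠ 0 := fun n =>
    qint_ne_zero (hv ▸ zpow_injective_X_pow hε.ne') (by omega)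
  have hm₀ : ((1 - c).toNat : ℤ) = 1 - c := Int.toNat_of_nonneg (by omega)
  have hbase : dpSum v Bi Bj (serreCoeff v c e (1 - c).toNat) (1 - c).toNat = 0 := by
    rw [serreCoeff_of_eq hm₀, dpSum_neg_one_pow, hm₀, hserre, smul_zero]
  exact dpSum_serreCoeff_eq_zero hv₀ hq he Bi Bj c hbase (by omega)

/-- (Proposition 3.4, case n = 1, order-reversed version.) Assuming the quantum Serre
relation, for every m > −c_{ij} and e ∈ {1, −1}:
∑_{r+s=m} (−1)^r q_i^{er(−c_{ij}−m+1)} B_i^{(s)} B_j B_i^{(r)} = 0. -/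
theorem stmt12 {K : Type*} [Field K] [CharZero K]
    {A : Type*} [Ring A] [Algebra (RatFunc K) A]
    (ε : ℕ) (hε : 0 < ε) (v : RatFunc K) (hv : v = RatFunc.X ^ ε)
    (Bi Bj : A) (c : ℤ) (hc : c ≤ 0)
    (hserre : ∑ n ∈ Finset.range ((1 - c).toNat + 1),
        ((-1 : RatFunc K) ^ n) • (dp v Bi (n : ℤ) * Bj * dp v Bi (1 - c - (n : ℤ))) = 0)
    (m : ℕ) (hm : -c < (m : ℤ)) (e : ℤ) (he : e = 1 ∨ e = -1) :
    ∑ r ∈ Finset.range (m + 1),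
        ((-1 : RatFunc K) ^ r * v ^ (e * (r : ℤ) * (-c - (m : ℤ) + 1))) •
          (dp v Bi ((m : ℤ) - (r : ℤ)) * Bj * dp v Bi (r : ℤ)) = 0 :=
  stmt12_general ε hε v hv Bi Bj c hc hserre m hm e he
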